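/- arXiv:math/0703119 — 4 statements merged into one kernel-verified Lean document; each statement's English description precedes it below -/
import Mathlib

section
/- Let (L, η) be an F-localization on a category C where F is a set of epimorphisms, and suppose every morphism of C factors as an epimorphism followed by a strong monomorphism. Then the class of L-local objects is closed under strong subobjects: if X is L-local and s : A → X is a strong monomorphism, then A is orthogonal to every f ∈ F, hence L-local. -/
open CategoryTheory

/-- If `L` is an `F`-localization for a set `F` of epimorphisms and every
morphism factors as an epimorphism followed by a strong monomorphism, then the
local objects are closed under strong subobjects. -/
theorem floc_closed_strong_subobjects {C : Type*} [Category C]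
    (L : C ⥤ C) (η : 𝟭 C ⟶ L)
    (hiso : ∀ X : C, IsIso (η.app (L.obj X)))
    (heq : ∀ X : C, η.app (L.obj X) = L.map (η.app X))
    {I : Type*} (P Q : I → C) (f : ∀ i, P i ⟶ Q i)
    (hfepi : ∀ i, Epi (f i))
    (hloc : ∀ X : C, IsIso (η.app X) ↔
      ∀ i, ∀ g : P i ⟶ X, ∃! g' : Q i ⟶ X, f i ≫ g' = g)
    (hfac : ∀ {X Y : C} (g : X ⟶ Y), ∃ (Z : C) (e : X ⟶ Z) (m : Z ⟶ Y),
      Epi e ∧ Mono m ∧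
      (∀ {P' Q' : C} (e' : P' ⟶ Q') (u : P' ⟶ Z) (v : Q' ⟶ Y),
        Epi e' → u ≫ m = e' ≫ v → ∃! d : Q' ⟶ Z, e' ≫ d = u ∧ d ≫ m = v) ∧
      e ≫ m = g)
    {A X : C} (s : A ⟶ X) (hsmono : Mono s)
    (hsstrong : ∀ {P' Q' : C} (e : P' ⟶ Q') (u : P' ⟶ A) (v : Q' ⟶ X),
      Epi e → u ≫ s = e ≫ v → ∃! d : Q' ⟶ A, e ≫ d = u ∧ d ≫ s = v)
    (hX : IsIso (η.app X)) :
    (∀ i, ∀ g : P i ⟶ A, ∃! g' : Q i ⟶ A, f i ≫ g' = g) ∧ IsIso (η.app A) := by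
  have key : ∀ i, ∀ g : P i ⟶ A, ∃! g' : Q i ⟶ A, f i ≫ g' = g := by
    intro i g
    obtain ⟨h, hh, huniq⟩ := (hloc X).mp hX i (g ≫ s)
    obtain ⟨d, ⟨hd1, hd2⟩, hduniq⟩ := hsstrong (f i) g h (hfepi i) hh.symm
    refine ⟨d, hd1, fun d' hd' => ?_⟩
    have : d' ≫ s = h := huniq (d' ≫ s) (by dsimp; rw [← Category.assoc]; exact congrArg (· ≫ s) hd')
    exact hduniq d' ⟨hd', this⟩
  exact ⟨key, (hloc A).mpr key⟩
end

section
/- Let (L, η) be an F-localization which is an epireflection, where F = {f_i : P_i → Q_i, i ∈ I}. Let E = {η_{P_i} : P_i → LP_i, i ∈ I} ∪ {η_{Q_i} : Q_i → LQ_i, i ∈ I}. Then every morphism in E is an epimorphism, and an object is E-local if and only if it is F-local. -/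
open CategoryTheory

/-- If an `F`-localization is an epireflection, then the set `E` of units on the
domains and codomains of the morphisms of `F` consists of epimorphisms and has
the same local objects as `F`. -/
theorem epireflection_units_same_local {C : Type*} [Category C]
    (L : C ⥤ C) (η : 𝟭 C ⟶ L)
    (hiso : ∀ X : C, IsIso (η.app (L.obj X)))
    (heq : ∀ X : C, η.app (L.obj X) = L.map (η.app X))
    (hepi : ∀ X : C, Epi (η.app X))
    {I : Type*} (P Q : I → C) (f : ∀ i, P i ⟶ Q i)
    (hloc : ∀ X : C, IsIso (η.app X) ↔
      ∀ i, ∀ g : P i ⟶ X, ∃! g' : Q i ⟶ X, f i ≫ g' = g) :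
    (∀ i, Epi (η.app (P i)) ∧ Epi (η.app (Q i))) ∧
    ∀ X : C,
      ((∀ i, (∀ g : P i ⟶ X, ∃! g' : L.obj (P i) ⟶ X, η.app (P i) ≫ g' = g) ∧
             (∀ g : Q i ⟶ X, ∃! g' : L.obj (Q i) ⟶ X, η.app (Q i) ≫ g' = g)) ↔
       (∀ i, ∀ g : P i ⟶ X, ∃! g' : Q i ⟶ X, f i ≫ g' = g)) := by
  refine ⟨fun i => ⟨hepi _, hepi _⟩, fun X => ⟨?_, ?_⟩⟩
  · intro hE i g
    obtain ⟨s, hs, hsu⟩ := (hloc (L.obj (P i))).mp (hiso (P i)) i (η.app (P i))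
    have hnat : η.app (P i) ≫ L.map (f i) = f i ≫ η.app (Q i) := (η.naturality (f i)).symm
    have hsLf : s ≫ L.map (f i) = η.app (Q i) := by
      obtain ⟨t, ht, htu⟩ := (hloc (L.obj (Q i))).mp (hiso (Q i)) i (f i ≫ η.app (Q i))
      rw [htu (s ≫ L.map (f i)) (by beta_reduce; rw [← Category.assoc, hs, hnat]),
          htu (η.app (Q i)) rfl]
    obtain ⟨g₁, hg₁, hg₁u⟩ := (hE i).1 g
    refine ⟨s ≫ g₁, by beta_reduce; rw [← Category.assoc, hs, hg₁], ?_⟩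
    intro g'' hg''
    obtain ⟨h'', hh'', _⟩ := (hE i).2 g''
    have hh : L.map (f i) ≫ h'' = g₁ :=
      hg₁u _ (by beta_reduce; rw [← Category.assoc, hnat, Category.assoc, hh'', hg''])
    rw [← hh'', ← hsLf, Category.assoc, hh]
  · intro hF i
    have hiX : IsIso (η.app X) := (hloc X).mpr hF
    constructor <;> intro g <;>
      exact ⟨L.map g ≫ inv (η.app X),
        by beta_reduce; rw [← Category.assoc, ← η.naturality g]; simp,
        fun y hy => by
          rw [← cancel_epi (η.app _), hy, ← Category.assoc, ← η.naturality g]; simp⟩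
end

section
/- Let (L, η) be an epireflection on a balanced category C, and suppose there is a set H of objects transverse to the class of non-L-local objects, i.e., every object of C that is not L-local admits a monomorphism from some non-L-local object of H. Then L is an F-localization for the set F = {η_A : A → LA, A ∈ H}: an object X is L-local if and only if X is orthogonal to η_A for every A ∈ H. -/
open CategoryTheory

/-- If `C` is balanced, `(L, η)` is an epireflection, and `H = {A i}` is a set
of objects transverse to the class of non-local objects, then `L` is the
localization with respect to `{η_{A i}}`. -/
theorem epireflection_transverse_localization {C : Type*} [Category C]
    (hbal : ∀ {A B : C} (f : A ⟶ B), Mono f → Epi f → IsIso f)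
    (L : C ⥤ C) (η : 𝟭 C ⟶ L)
    (hiso : ∀ X : C, IsIso (η.app (L.obj X)))
    (heq : ∀ X : C, η.app (L.obj X) = L.map (η.app X))
    (hepi : ∀ X : C, Epi (η.app X))
    {I : Type*} (A : I → C)
    (htrans : ∀ X : C, ¬IsIso (η.app X) →
      ∃ i, ¬IsIso (η.app (A i)) ∧ ∃ s : A i ⟶ X, Mono s) :
    ∀ X : C, IsIso (η.app X) ↔
      ∀ i, ∀ g : A i ⟶ X, ∃! g' : L.obj (A i) ⟶ X, η.app (A i) ≫ g' = g := by
  intro X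
  constructor
  · intro hX i g
    refine ⟨L.map g ≫ inv (η.app X), ?_, ?_⟩
    · show η.app (A i) ≫ (L.map g ≫ inv (η.app X)) = g
      rw [← Category.assoc, ← η.naturality g]
      simp
    · intro y hy
      have := hepi (A i)
      rw [← cancel_epi (η.app (A i)), hy, ← Category.assoc, ← η.naturality g]
      simp
  · intro h
    by_contra hX
    obtain ⟨i, hni, s, hs⟩ := htrans X hX
    obtain ⟨g', hg', _⟩ := h i s
    have : Mono (η.app (A i)) := mono_of_mono_fac hg'
    exact hni (hbal _ this (hepi _))
end

section
/- Let (L, η) be an epireflection on a category C such that η_A is an extremal epimorphism for each A in a set H of objects, and suppose H is transverse to the class of non-L-local objects (every non-L-local object admits a monomorphism from some non-L-local member of H). Then an object X is L-local if and only if X is orthogonal to η_A for all A ∈ H. -/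
open CategoryTheory

/-- If `(L, η)` is an epireflection whose units at the members of a set `H`
transverse to the class of non-local objects are extremal epimorphisms, then an
object is local if and only if it is orthogonal to the units at the members of
`H`. -/
theorem extremal_epireflection_transverse_localization {C : Type*} [Category C]
    (L : C ⥤ C) (η : 𝟭 C ⟶ L)
    (hiso : ∀ X : C, IsIso (η.app (L.obj X)))
    (heq : ∀ X : C, η.app (L.obj X) = L.map (η.app X))
    (hepi : ∀ X : C, Epi (η.app X))
    {I : Type*} (A : I → C)
    (hext : ∀ i, ∀ {Z : C} (g : A i ⟶ Z) (m : Z ⟶ L.obj (A i)),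
      Mono m → g ≫ m = η.app (A i) → IsIso m)
    (htrans : ∀ X : C, ¬IsIso (η.app X) →
      ∃ i, ¬IsIso (η.app (A i)) ∧ ∃ s : A i ⟶ X, Mono s) :
    ∀ X : C, IsIso (η.app X) ↔
      ∀ i, ∀ g : A i ⟶ X, ∃! g' : L.obj (A i) ⟶ X, η.app (A i) ≫ g' = g := by
  intro X
  constructor
  · intro hX i g
    haveI := hepi (A i)
    refine ⟨L.map g ≫ inv (η.app X), ?_, ?_⟩
    · have hnat : g ≫ η.app X = η.app (A i) ≫ L.map g := by
        simpa using η.naturality g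
      show η.app (A i) ≫ (L.map g ≫ inv (η.app X)) = g
      rw [← Category.assoc, ← hnat, Category.assoc, IsIso.hom_inv_id,
        Category.comp_id]
    · intro g' hg'
      rw [← cancel_epi (η.app (A i))]
      rw [hg', ← Category.assoc]
      have hnat : g ≫ η.app X = η.app (A i) ≫ L.map g := by
        simpa using η.naturality g
      rw [← hnat, Category.assoc, IsIso.hom_inv_id, Category.comp_id]
  · intro h
    by_contra hX
    obtain ⟨i, hni, s, hs⟩ := htrans X hX
    haveI := hs
    obtain ⟨g', hg', -⟩ := h i s
    have hmono : Mono (η.app (A i)) := by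
      constructor
      intro W u v huv
      have h2 : u ≫ s = v ≫ s := by
        rw [← hg', ← Category.assoc, ← Category.assoc, huv]
      exact (cancel_mono s).mp h2
    exact hni (hext i (𝟙 _) (η.app (A i)) hmono (Category.id_comp _))
end
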